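/- arXiv:2010.08695 — 2 statements merged into one kernel-verified Lean document; each statement's English description precedes it below -/
import Mathlib

section
/- Let S ⊆ U and u ∈ U \ S. Then the number of butterflies containing u in the subgraph of G induced on (U \ S) ∪ V equals ⋈_u − Σ_{u'∈S} ⋈_{u,u'}, where ⋈_u is the number of butterflies containing u in G and ⋈_{u,u'} is the number of butterflies of G containing both u and u'. In particular, this quantity depends only on the set S and not on any order in which vertices of S are removed. -/
/-! A butterfly has exactly two `U`-vertices, so a butterfly through `u ∉ S` contains at most one
vertex of `S`. Hence the butterflies through `u` that meet `S` are partitioned according to the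
vertex `u' ∈ S` they contain, and there are `∑_{u' ∈ S} ⋈_{u,u'}` of them; the remaining
butterflies through `u` are exactly those of the induced subgraph. -/

open Finset

variable {α β : Type*} [Fintype α] [Fintype β] [DecidableEq α] [DecidableEq β]

/-- Neighborhood (in the `V` side) of a `U`-side vertex, for bipartite adjacency `A`. -/
def nbrU (A : α → β → Prop) [∀ u v, Decidable (A u v)] (u : α) : Finset β :=
  univ.filter (fun v => A u v)

/-- Neighborhood (in the `U` side) of a `V`-side vertex. -/
def nbrV (A : α → β → Prop) [∀ u v, Decidable (A u v)] (v : β) : Finset α :=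
  univ.filter (fun u => A u v)

/-- A butterfly (2,2-biclique): a pair of a 2-subset of `U` and a 2-subset of `V`
with all four cross edges present. -/
def butterflies (A : α → β → Prop) [∀ u v, Decidable (A u v)] : Finset (Finset α × Finset β) :=
  univ.filter (fun p => p.1.card = 2 ∧ p.2.card = 2 ∧ ∀ u ∈ p.1, ∀ v ∈ p.2, A u v)

/-- Number of butterflies containing the `U`-vertex `u`. -/
def btfCount (A : α → β → Prop) [∀ u v, Decidable (A u v)] (u : α) : ℕ :=
  ((butterflies A).filter (fun p => u ∈ p.1)).card

/-- Number of butterflies containing both `U`-vertices `u` and `u'`. -/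
def btfCountPair (A : α → β → Prop) [∀ u v, Decidable (A u v)] (u u' : α) : ℕ :=
  ((butterflies A).filter (fun p => u ∈ p.1 ∧ u' ∈ p.1)).card

/-- Butterflies of the subgraph induced on `S ∪ V`. -/
def butterfliesIn (A : α → β → Prop) [∀ u v, Decidable (A u v)] (S : Finset α) :
    Finset (Finset α × Finset β) :=
  (butterflies A).filter (fun p => p.1 ⊆ S)

/-- Number of butterflies containing `u` in the subgraph induced on `S ∪ V`. -/
def btfCountIn (A : α → β → Prop) [∀ u v, Decidable (A u v)] (S : Finset α) (u : α) : ℕ :=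
  ((butterfliesIn A S).filter (fun p => u ∈ p.1)).card

/-- Wedges with both endpoints in `U`: a 2-subset of `U` together with a common neighbor. -/
def wedges (A : α → β → Prop) [∀ u v, Decidable (A u v)] : Finset (Finset α × β) :=
  univ.filter (fun p => p.1.card = 2 ∧ ∀ u ∈ p.1, A u p.2)

/-- Two `U`-vertices are connected by a series of butterflies within the subgraph induced
on `S ∪ V`. -/
def btfConnected (A : α → β → Prop) [∀ u v, Decidable (A u v)] (S : Finset α) : α → α → Prop :=
  Relation.ReflTransGen (fun a b => ∃ p ∈ butterfliesIn A S, a ∈ p.1 ∧ b ∈ p.1)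

/-- The two defining conditions of a `k`-tip (before maximality): every vertex of `S` has at
least `k` butterflies in the induced subgraph, and `S` is butterfly-connected. -/
def tipCond (A : α → β → Prop) [∀ u v, Decidable (A u v)] (k : ℕ) (S : Finset α) : Prop :=
  (∀ u ∈ S, k ≤ btfCountIn A S u) ∧ ∀ u1 ∈ S, ∀ u2 ∈ S, btfConnected A S u1 u2

/-- A `k`-tip: a maximal set satisfying the `k`-tip conditions. -/
def kTip (A : α → β → Prop) [∀ u v, Decidable (A u v)] (k : ℕ) (S : Finset α) : Prop :=
  tipCond A k S ∧ ∀ S', S ⊆ S' → tipCond A k S' → S' = S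

/-- The tip number of `u`: the largest `k` such that `u` lies in some `k`-tip. -/
noncomputable def tipNumber (A : α → β → Prop) [∀ u v, Decidable (A u v)] (u : α) : ℕ :=
  sSup {k : ℕ | ∃ S, kTip A k S ∧ u ∈ S}

section Butterflies

variable (A : α → β → Prop) [∀ u v, Decidable (A u v)]

theorem eq_of_mem_butterflies {p : Finset α × Finset β} (hp : p ∈ butterflies A) {u x y : α}
    (hu : u ∈ p.1) (hx : x ∈ p.1) (hy : y ∈ p.1) (hux : u ≠ x) (huy : u ≠ y) : x = y := by
  by_contra hxy
  have hcard : p.1.card = 2 := (mem_filter.1 hp).2.1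
  have : 2 < p.1.card := two_lt_card.2 ⟨u, hu, x, hx, y, hy, hux, huy, hxy⟩
  omega

theorem pairwiseDisjoint_filter_mem_butterflies {u : α} {S : Finset α} (hu : u ∉ S) :
    (S : Set α).PairwiseDisjoint
      fun x => (butterflies A).filter fun p => u ∈ p.1 ∧ x ∈ p.1 := by
  intro x hx y hy hxy
  refine disjoint_left.2 fun p hpx hpy => hxy ?_
  rw [mem_filter] at hpx hpy
  exact eq_of_mem_butterflies A hpx.1 hpx.2.1 hpx.2.2 hpy.2.2
    (ne_of_mem_of_not_mem (mem_coe.1 hx) hu).symm (ne_of_mem_of_not_mem (mem_coe.1 hy) hu).symm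

theorem filter_mem_not_subset_compl_eq_biUnion (u : α) (S : Finset α) :
    ((butterflies A).filter fun p => u ∈ p.1 ∧ ¬p.1 ⊆ univ \ S) =
      S.biUnion fun x => (butterflies A).filter fun p => u ∈ p.1 ∧ x ∈ p.1 := by
  ext p
  simp only [mem_filter, mem_biUnion, subset_iff, mem_sdiff, mem_univ, true_and, not_forall,
    not_not, exists_prop]
  tauto

theorem btfCount_eq_btfCountIn_compl_add_sum {u : α} {S : Finset α} (hu : u ∉ S) :
    btfCount A u = btfCountIn A (univ \ S) u + ∑ x ∈ S, btfCountPair A u x := by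
  have hmeet : ∑ x ∈ S, btfCountPair A u x =
      ((butterflies A).filter fun p => u ∈ p.1 ∧ ¬p.1 ⊆ univ \ S).card := by
    rw [filter_mem_not_subset_compl_eq_biUnion, card_biUnion
      (pairwiseDisjoint_filter_mem_butterflies A hu)]
    rfl
  rw [hmeet, btfCount, ← card_filter_add_card_filter_not (p := fun p => p.1 ⊆ univ \ S),
    filter_filter, filter_filter, btfCountIn, butterfliesIn, filter_filter]
  simp only [and_comm]

end Butterflies

/-- for `S ⊆ U` and `u ∉ S`, the butterfly count of `u` in the subgraph
induced on `(U \\ S) ∪ V` equals `⋈_u − Σ_{u'∈S} ⋈_{u,u'}`; in particular it depends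
only on the set `S`, not on any removal order. -/
theorem stmt9 (A : α → β → Prop) [∀ u v, Decidable (A u v)]
    (S : Finset α) (u : α) (hu : u ∉ S) :
    btfCountIn A (univ \ S) u = btfCount A u - ∑ u' ∈ S, btfCountPair A u u' := by
  rw [btfCount_eq_btfCountIn_compl_add_sum A hu, Nat.add_sub_cancel]
end

section
/- Two distinct maximal k-tips of a bipartite graph have disjoint U-vertex sets: if H1 and H2 are k-tips induced on U1 ∪ V and U2 ∪ V respectively and U1 ∩ U2 ≠ ∅, then U1 = U2. -/
open Finset

variable {α β : Type*} [Fintype α] [Fintype β] [DecidableEq α] [DecidableEq β]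

/- The union of two butterfly-connected sets sharing a vertex `w` is again butterfly-connected
(every vertex reaches `w`), and butterfly counts only grow on passing to a larger vertex set.
So if two `k`-tips meet, their union satisfies the `k`-tip conditions, and maximality of each
forces both to equal the union. -/

section

variable {A : α → β → Prop} [∀ u v, Decidable (A u v)]

lemma butterfliesIn_mono {S S' : Finset α} (h : S ⊆ S') :
    butterfliesIn A S ⊆ butterfliesIn A S' :=
  monotone_filter_right _ fun _ _ hp => hp.trans h

lemma btfCountIn_mono {S S' : Finset α} (h : S ⊆ S') (u : α) :
    btfCountIn A S u ≤ btfCountIn A S' u :=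
  card_le_card (filter_subset_filter _ (butterfliesIn_mono h))

lemma btfConnected_mono {S S' : Finset α} (h : S ⊆ S') {a b : α}
    (hab : btfConnected A S a b) : btfConnected A S' a b :=
  Relation.ReflTransGen.mono
    (fun _ _ ⟨p, hp, hx, hy⟩ => ⟨p, butterfliesIn_mono h hp, hx, hy⟩) _ _ hab

lemma btfConnected_symm {S : Finset α} {a b : α} (hab : btfConnected A S a b) :
    btfConnected A S b a := by
  induction hab with
  | refl => exact .refl
  | tail _ hstep ih =>
    obtain ⟨p, hp, hx, hy⟩ := hstep
    exact .head ⟨p, hp, hy, hx⟩ ih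

lemma tipCond_union {k : ℕ} {U1 U2 : Finset α} (h1 : tipCond A k U1) (h2 : tipCond A k U2)
    (hmeet : (U1 ∩ U2).Nonempty) : tipCond A k (U1 ∪ U2) := by
  obtain ⟨w, hw⟩ := hmeet
  obtain ⟨hw1, hw2⟩ := mem_inter.1 hw
  have connected_to_w : ∀ u ∈ U1 ∪ U2, btfConnected A (U1 ∪ U2) u w := by
    intro u hu
    rcases mem_union.1 hu with hu | hu
    · exact btfConnected_mono subset_union_left (h1.2 u hu w hw1)
    · exact btfConnected_mono subset_union_right (h2.2 u hu w hw2)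
  refine ⟨fun u hu => ?_, fun u hu u' hu' =>
    (connected_to_w u hu).trans (btfConnected_symm (connected_to_w u' hu'))⟩
  rcases mem_union.1 hu with hu | hu
  · exact (h1.1 u hu).trans (btfCountIn_mono subset_union_left u)
  · exact (h2.1 u hu).trans (btfCountIn_mono subset_union_right u)

end

/-- two `k`-tips whose `U`-vertex sets intersect are equal. -/
theorem stmt13 (A : α → β → Prop) [∀ u v, Decidable (A u v)]
    (k : ℕ) (U1 U2 : Finset α) (h1 : kTip A k U1) (h2 : kTip A k U2)
    (hmeet : (U1 ∩ U2).Nonempty) :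
    U1 = U2 := by
  have hunion := tipCond_union h1.1 h2.1 hmeet
  exact (h1.2 _ subset_union_left hunion).symm.trans (h2.2 _ subset_union_right hunion)
end
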